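/- Comparison principle: Let y⁻(φ,τ) and y⁺(φ,τ) be non-negative smooth sub- and super-solutions of ∂_τ y − ℰ[y] where ℰ[y] = y·y_{φφ} + (2 − φ − y_φ)y_φ + y(1 − y/φ²), on the domain {(φ,τ) : 1 ≤ φ ≤ b(τ), 0 ≤ τ ≤ τ̄} with b(τ) = (b₀−3a₀)e^τ + 3. Assume y⁺_{φφ} < C on this compact domain for a finite constant C, y⁺(φ,0) > y⁻(φ,0) for φ in the interior at τ = 0, and y⁺ ≥ y⁻ on the lateral boundaries φ = 1 and φ = b(τ). Then y⁺ ≥ y⁻ everywhere on the domain. -/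

import Mathlib

noncomputable def yP (y : ℝ → ℝ → ℝ) (x t : ℝ) : ℝ := deriv (fun s => y s t) x
noncomputable def yPP (y : ℝ → ℝ → ℝ) (x t : ℝ) : ℝ := deriv (fun s => yP y s t) x
noncomputable def yT (y : ℝ → ℝ → ℝ) (x t : ℝ) : ℝ := deriv (fun s => y x s) t
/-- The elliptic operator ℰ applied to the time-t spatial slice of y. -/
noncomputable def Eop2 (y : ℝ → ℝ → ℝ) (x t : ℝ) : ℝ :=
  y x t * yPP y x t + (2 - x - yP y x t) * yP y x t + y x t * (1 - y x t / x ^ 2)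
/-- The moving right boundary b(τ) = (b₀ - 3a₀)e^τ + 3. -/
noncomputable def bFun (a₀ b₀ τ : ℝ) : ℝ := (b₀ - 3 * a₀) * Real.exp τ + 3
/-- The space-time domain {(φ,τ) : 1 ≤ φ ≤ b(τ), 0 ≤ τ ≤ τ̄}. -/
def inDom (a₀ b₀ τb x t : ℝ) : Prop := 1 ≤ x ∧ x ≤ bFun a₀ b₀ t ∧ 0 ≤ t ∧ t ≤ τb

open Set Filter Topology

lemma derivNonposLeft {f : ℝ → ℝ} {a f' : ℝ} (hf : HasDerivAt f f' a)
    (h : ∀ᶠ x in 𝓝[<] a, f a ≤ f x) : f' ≤ 0 := by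
  have hsub : Set.Iio a ⊆ {a}ᶜ := fun x hx => ne_of_lt hx
  have hs := (hasDerivAt_iff_tendsto_slope.mp hf).mono_left (nhdsWithin_mono a hsub)
  refine le_of_tendsto hs ?_
  filter_upwards [h, self_mem_nhdsWithin] with x hx hxa
  rw [slope_def_field]
  simp only [mem_Iio] at hxa
  exact div_nonpos_iff.mpr (Or.inl ⟨by linarith, by linarith⟩)

lemma secondDerivTest {f : ℝ → ℝ} (hf : ContDiff ℝ ((⊤:ℕ∞) : WithTop ℕ∞) f) {l r a : ℝ}
    (hla : l < a) (har : a < r) (hmin : ∀ x ∈ Set.Icc l r, f a ≤ f x) :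
    0 ≤ deriv (deriv f) a := by
  by_contra hneg
  push_neg at hneg
  have hdf : Differentiable ℝ f := hf.differentiable (by simp)
  have hdf' : Differentiable ℝ (deriv f) :=
    ((contDiff_infty_iff_deriv.mp hf).2).differentiable (by simp)
  have hloc : IsLocalMin f a := Filter.eventually_of_mem (Icc_mem_nhds hla har) hmin
  have hd0 : deriv f a = 0 := hloc.deriv_eq_zero
  have hslope : Filter.Tendsto (slope (deriv f) a) (𝓝[≠] a) (𝓝 (deriv (deriv f) a)) :=
    hasDerivAt_iff_tendsto_slope.mp (hdf' a).hasDerivAt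
  have hev : ∀ᶠ x in 𝓝[<] a, 0 < deriv f x := by
    have h1 : ∀ᶠ x in 𝓝[<] a, slope (deriv f) a x < 0 :=
      (hslope.mono_left (nhdsWithin_mono a
        (fun x (hx : x ∈ Iio a) => ne_of_lt hx))).eventually_lt_const hneg
    filter_upwards [h1, self_mem_nhdsWithin] with x hx hxa
    simp only [mem_Iio] at hxa
    rw [slope_def_field, hd0, sub_zero] at hx
    rcases div_neg_iff.mp hx with ⟨h1', _⟩ | ⟨_, h2'⟩
    · exact h1'
    · linarith
  obtain ⟨l', hl', hsub⟩ := mem_nhdsLT_iff_exists_Ioo_subset.mp hev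
  simp only [mem_Iio] at hl'
  set l'' := max l l' with hl''
  have hl''a : l'' < a := max_lt hla hl'
  have hmono : StrictMonoOn f (Icc l'' a) := by
    apply strictMonoOn_of_deriv_pos (convex_Icc _ _) hdf.continuous.continuousOn
    intro x hx
    rw [interior_Icc] at hx
    exact hsub ⟨lt_of_le_of_lt (le_max_right l l') hx.1, hx.2⟩
  have hc : (l'' + a) / 2 ∈ Icc l'' a := ⟨by linarith, by linarith⟩
  have hca : f ((l'' + a) / 2) < f a :=
    hmono hc (right_mem_Icc.mpr (le_of_lt hl''a)) (by linarith)
  have : f a ≤ f ((l'' + a) / 2) :=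
    hmin _ ⟨le_trans (le_max_left l l') hc.1, by linarith⟩
  linarith

lemma sliceX {y : ℝ → ℝ → ℝ} (hy : ContDiff ℝ (⊤ : ℕ∞) (Function.uncurry y)) (t : ℝ) :
    ContDiff ℝ ((⊤:ℕ∞) : WithTop ℕ∞) (fun x => y x t) :=
  (hy.of_le (by simp)).comp (contDiff_id.prodMk contDiff_const)

lemma sliceT {y : ℝ → ℝ → ℝ} (hy : ContDiff ℝ (⊤ : ℕ∞) (Function.uncurry y)) (x : ℝ) :
    ContDiff ℝ ((⊤:ℕ∞) : WithTop ℕ∞) (fun t => y x t) :=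
  (hy.of_le (by simp)).comp (contDiff_const.prodMk contDiff_id)

lemma sliceX_diff {y : ℝ → ℝ → ℝ} (hy : ContDiff ℝ (⊤ : ℕ∞) (Function.uncurry y)) (t : ℝ) :
    Differentiable ℝ (fun x => y x t) :=
  (sliceX hy t).differentiable (by simp)

lemma sliceT_diff {y : ℝ → ℝ → ℝ} (hy : ContDiff ℝ (⊤ : ℕ∞) (Function.uncurry y)) (x : ℝ) :
    Differentiable ℝ (fun t => y x t) :=
  (sliceT hy x).differentiable (by simp)

lemma yP_smooth {y : ℝ → ℝ → ℝ} (hy : ContDiff ℝ (⊤ : ℕ∞) (Function.uncurry y)) (t : ℝ) :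
    ContDiff ℝ ((⊤:ℕ∞) : WithTop ℕ∞) (fun x => yP y x t) := by
  have := (contDiff_infty_iff_deriv.mp (sliceX hy t)).2
  exact this

lemma yP_diff {y : ℝ → ℝ → ℝ} (hy : ContDiff ℝ (⊤ : ℕ∞) (Function.uncurry y)) (t : ℝ) :
    Differentiable ℝ (fun x => yP y x t) :=
  (yP_smooth hy t).differentiable (by simp)

set_option maxHeartbeats 2000000 in
theorem stmt12 (a₀ b₀ C τb : ℝ) (ha₀ : 0 < a₀) (hb₀ : 3 * a₀ < b₀) (hτb : 0 < τb)
    (ym yp : ℝ → ℝ → ℝ)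
    (hym : ContDiff ℝ (⊤ : ℕ∞) (Function.uncurry ym))
    (hyp : ContDiff ℝ (⊤ : ℕ∞) (Function.uncurry yp))
    (hnnm : ∀ x t : ℝ, inDom a₀ b₀ τb x t → 0 ≤ ym x t)
    (hnnp : ∀ x t : ℝ, inDom a₀ b₀ τb x t → 0 ≤ yp x t)
    (hsub : ∀ x t : ℝ, inDom a₀ b₀ τb x t → yT ym x t ≤ Eop2 ym x t)
    (hsup : ∀ x t : ℝ, inDom a₀ b₀ τb x t → Eop2 yp x t ≤ yT yp x t)
    (hC : ∀ x t : ℝ, inDom a₀ b₀ τb x t → yPP yp x t < C)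
    (hinit : ∀ x : ℝ, 1 < x → x < b₀ - 3 * a₀ + 3 → ym x 0 < yp x 0)
    (hlat : ∀ t : ℝ, 0 ≤ t → t ≤ τb →
      ym 1 t ≤ yp 1 t ∧ ym (bFun a₀ b₀ t) t ≤ yp (bFun a₀ b₀ t) t) :
    ∀ x t : ℝ, inDom a₀ b₀ τb x t → ym x t ≤ yp x t := by
  have hba : (0:ℝ) < b₀ - 3 * a₀ := by linarith
  have hbge : ∀ t : ℝ, 0 ≤ t → b₀ - 3 * a₀ + 3 ≤ bFun a₀ b₀ t := by
    intro t ht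
    have h1 : (1:ℝ) ≤ Real.exp t := Real.one_le_exp ht
    unfold bFun; nlinarith
  have hb1 : ∀ t : ℝ, 0 ≤ t → (1:ℝ) < bFun a₀ b₀ t := by
    intro t ht; have := hbge t ht; linarith
  have hbmono : ∀ s t : ℝ, s ≤ t → bFun a₀ b₀ s ≤ bFun a₀ b₀ t := by
    intro s t hst; unfold bFun
    nlinarith [Real.exp_le_exp.mpr hst, Real.exp_pos s]
  have hbcont : Continuous (fun t => bFun a₀ b₀ t) := by
    unfold bFun; continuity
  set K := |C| + 2 with hKdef
  have hK0 : 0 ≤ K := by have := abs_nonneg C; linarith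
  have hKC : C + 1 < K := by have := le_abs_self C; linarith
  have key : ∀ δ : ℝ, 0 < δ → ∀ x t : ℝ, inDom a₀ b₀ τb x t →
      -(δ * Real.exp (K * t)) < yp x t - ym x t := by
    intro δ hδ
    by_contra hcon
    push_neg at hcon
    obtain ⟨x₀', t₀', hdom', hle'⟩ := hcon
    set g : ℝ × ℝ → ℝ := fun p => yp p.1 p.2 - ym p.1 p.2 + δ * Real.exp (K * p.2) with hg
    have hgc : Continuous g := by
      refine (Continuous.sub ?_ ?_).add
        (continuous_const.mul (Real.continuous_exp.comp (continuous_const.mul continuous_snd)))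
      · exact hyp.continuous.comp (continuous_fst.prodMk continuous_snd)
      · exact hym.continuous.comp (continuous_fst.prodMk continuous_snd)
    set S := {p : ℝ × ℝ | inDom a₀ b₀ τb p.1 p.2 ∧ g p ≤ 0} with hS
    have hSne : S.Nonempty := ⟨(x₀', t₀'), hdom', by simp only [hg]; linarith⟩
    have hSclosed : IsClosed S := by
      have : S = ({p : ℝ × ℝ | 1 ≤ p.1} ∩ {p | p.1 ≤ bFun a₀ b₀ p.2} ∩ {p | 0 ≤ p.2}
          ∩ {p | p.2 ≤ τb}) ∩ {p | g p ≤ 0} := by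
        ext p; simp only [hS, inDom, Set.mem_setOf_eq, Set.mem_inter_iff]; tauto
      rw [this]
      refine IsClosed.inter (IsClosed.inter (IsClosed.inter (IsClosed.inter ?_ ?_) ?_) ?_) ?_
      · exact isClosed_le continuous_const continuous_fst
      · exact isClosed_le continuous_fst (hbcont.comp continuous_snd)
      · exact isClosed_le continuous_const continuous_snd
      · exact isClosed_le continuous_snd continuous_const
      · exact isClosed_le hgc continuous_const
    have hScomp : IsCompact S := by
      refine IsCompact.of_isClosed_subset (isCompact_Icc
        (a := ((1:ℝ), (0:ℝ))) (b := (bFun a₀ b₀ τb, τb))) hSclosed ?_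
      rintro ⟨x, t⟩ ⟨⟨h1, h2, h3, h4⟩, -⟩
      exact ⟨⟨h1, h3⟩, ⟨le_trans h2 (hbmono t τb h4), h4⟩⟩
    obtain ⟨⟨x₀, t₀⟩, hp₀S, hp₀min⟩ := hScomp.exists_isMinOn hSne continuous_snd.continuousOn
    have hmin : ∀ q ∈ S, t₀ ≤ q.2 := fun q hq => hp₀min hq
    obtain ⟨dom₀, hg₀⟩ := hp₀S
    have hb0 : bFun a₀ b₀ 0 = b₀ - 3 * a₀ + 3 := by simp [bFun]
    have ht₀pos : 0 < t₀ := by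
      rcases eq_or_lt_of_le dom₀.2.2.1 with h0 | h0
      · exfalso
        have hx1 : 1 ≤ x₀ := dom₀.1
        have hxb : x₀ ≤ bFun a₀ b₀ 0 := by rw [h0]; exact dom₀.2.1
        have h0' : t₀ = 0 := h0.symm
        have hgval : g (x₀, t₀) = yp x₀ 0 - ym x₀ 0 + δ := by
          simp only [hg]
          rw [h0', mul_zero, Real.exp_zero, mul_one]
        have hwpos : 0 ≤ yp x₀ 0 - ym x₀ 0 := by
          rcases eq_or_lt_of_le hx1 with h1 | h1
          · have := (hlat 0 le_rfl hτb.le).1; rw [← h1]; linarith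
          · rcases eq_or_lt_of_le hxb with h2 | h2
            · have := (hlat 0 le_rfl hτb.le).2; rw [h2]; linarith
            · have := hinit x₀ h1 (by rwa [hb0] at h2); linarith
        rw [hgval] at hg₀; linarith
      · exact h0
    set B := bFun a₀ b₀ t₀ with hB
    set u : ℝ → ℝ := fun x => yp x t₀ - ym x t₀ with hu
    have hucont : Continuous u := ((sliceX_diff hyp t₀).continuous).sub (sliceX_diff hym t₀).continuous
    have h1B : (1:ℝ) ≤ B := (hb1 t₀ dom₀.2.2.1).le
    obtain ⟨x₁, hx₁mem, hx₁min'⟩ := isCompact_Icc.exists_isMinOn (Set.nonempty_Icc.mpr h1B)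
      hucont.continuousOn
    have hx₁min : ∀ z ∈ Icc 1 B, u x₁ ≤ u z := fun z hz => hx₁min' hz
    have hux₁ : u x₁ ≤ u x₀ := hx₁min x₀ ⟨dom₀.1, dom₀.2.1⟩
    have hδe : 0 < δ * Real.exp (K * t₀) := by positivity
    have hg₀' : u x₀ + δ * Real.exp (K * t₀) ≤ 0 := hg₀
    have hux₁neg : u x₁ + δ * Real.exp (K * t₀) ≤ 0 := by linarith
    have hx₁1 : 1 < x₁ := by
      rcases eq_or_lt_of_le hx₁mem.1 with h1 | h1
      · exfalso
        have := (hlat t₀ dom₀.2.2.1 dom₀.2.2.2).1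
        have : 0 ≤ u 1 := by simp only [hu]; linarith
        rw [h1] at this; linarith
      · exact h1
    have hx₁B : x₁ < B := by
      rcases eq_or_lt_of_le hx₁mem.2 with h1 | h1
      · exfalso
        have := (hlat t₀ dom₀.2.2.1 dom₀.2.2.2).2
        have h2 : 0 ≤ u B := by simp only [hu, hB]; linarith
        rw [h1] at hux₁neg
        linarith
      · exact h1
    have dom₁ : inDom a₀ b₀ τb x₁ t₀ := ⟨hx₁mem.1, hx₁mem.2, dom₀.2.2.1, dom₀.2.2.2⟩
    have hS₁ : (x₁, t₀) ∈ S := ⟨dom₁, by simp only [hg]; exact hux₁neg⟩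
    set hfun : ℝ → ℝ := fun t => yp x₁ t - ym x₁ t + δ * Real.exp (K * t) with hh
    have hev : ∀ᶠ t in 𝓝[<] t₀, 0 < hfun t := by
      have h1 : ∀ᶠ t in 𝓝 t₀, x₁ < bFun a₀ b₀ t :=
        ContinuousAt.eventually_lt continuousAt_const hbcont.continuousAt hx₁B
      have h2 : ∀ᶠ t in 𝓝 t₀, 0 < t := eventually_gt_nhds ht₀pos
      filter_upwards [(h1.and h2).filter_mono nhdsWithin_le_nhds, self_mem_nhdsWithin]
        with t ht htlt
      simp only [mem_Iio] at htlt
      by_contra hng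
      push_neg at hng
      have hmemS : (x₁, t) ∈ S :=
        ⟨⟨hx₁mem.1.trans' le_rfl, ht.1.le, ht.2.le, le_trans htlt.le dom₀.2.2.2⟩, hng⟩
      have := hmin _ hmemS
      simp only at this
      linarith
    have hhcont : Continuous hfun :=
      (((sliceT_diff hyp x₁).continuous).sub (sliceT_diff hym x₁).continuous).add
        (continuous_const.mul (Real.continuous_exp.comp (continuous_const.mul continuous_id)))
    have hht₀0 : hfun t₀ = 0 := by
      have hge : 0 ≤ hfun t₀ :=
        ge_of_tendsto (hhcont.continuousAt.tendsto.mono_left nhdsWithin_le_nhds)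
          (hev.mono fun t ht => ht.le)
      have hle : hfun t₀ ≤ 0 := hS₁.2
      linarith
    -- time derivative
    have hdm : HasDerivAt (fun t => ym x₁ t) (yT ym x₁ t₀) t₀ := (sliceT_diff hym x₁ t₀).hasDerivAt
    have hdp : HasDerivAt (fun t => yp x₁ t) (yT yp x₁ t₀) t₀ := (sliceT_diff hyp x₁ t₀).hasDerivAt
    have hde : HasDerivAt (fun t => δ * Real.exp (K * t))
        (δ * (Real.exp (K * t₀) * K)) t₀ := by
      have h1 : HasDerivAt (fun t : ℝ => K * t) (K * 1) t₀ := (hasDerivAt_id t₀).const_mul K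
      have h2 := (Real.hasDerivAt_exp (K * t₀)).comp t₀ h1
      have h3 := h2.const_mul δ
      simpa [Function.comp_def] using h3
    have hdh : HasDerivAt hfun
        (yT yp x₁ t₀ - yT ym x₁ t₀ + δ * (Real.exp (K * t₀) * K)) t₀ := (hdp.sub hdm).add hde
    have hder : yT yp x₁ t₀ - yT ym x₁ t₀ + δ * (Real.exp (K * t₀) * K) ≤ 0 := by
      refine derivNonposLeft hdh ?_
      filter_upwards [hev] with t ht
      rw [hht₀0]; exact ht.le
    -- spatial derivatives
    have hupC : ContDiff ℝ ((⊤:ℕ∞) : WithTop ℕ∞) u := (sliceX hyp t₀).sub (sliceX hym t₀)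
    have hupp : 0 ≤ deriv (deriv u) x₁ := secondDerivTest hupC hx₁1 hx₁B hx₁min
    have hu1 : deriv u x₁ = 0 :=
      (hx₁min'.isLocalMin (Icc_mem_nhds hx₁1 hx₁B)).deriv_eq_zero
    have hdu : deriv u = fun z => yP yp z t₀ - yP ym z t₀ := by
      funext z
      exact deriv_sub (sliceX_diff hyp t₀ z) (sliceX_diff hym t₀ z)
    have hP : yP ym x₁ t₀ = yP yp x₁ t₀ := by
      rw [hdu] at hu1; simp only at hu1; linarith
    have hPP : 0 ≤ yPP yp x₁ t₀ - yPP ym x₁ t₀ := by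
      rw [hdu] at hupp
      have heq2 : deriv (fun z => yP yp z t₀ - yP ym z t₀) x₁
          = yPP yp x₁ t₀ - yPP ym x₁ t₀ :=
        deriv_sub (yP_diff hyp t₀ x₁) (yP_diff hym t₀ x₁)
      rw [heq2] at hupp; exact hupp
    -- PDE inequalities at (x₁, t₀)
    have hEm := hsub x₁ t₀ dom₁
    have hEp := hsup x₁ t₀ dom₁
    have hCC := hC x₁ t₀ dom₁
    have hyp0 := hnnp x₁ t₀ dom₁
    have hym0 := hnnm x₁ t₀ dom₁
    have hmval : ym x₁ t₀ = yp x₁ t₀ + δ * Real.exp (K * t₀) := by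
      have : yp x₁ t₀ - ym x₁ t₀ + δ * Real.exp (K * t₀) = 0 := hht₀0
      linarith
    set e := δ * Real.exp (K * t₀) with he
    set a := yp x₁ t₀ with ha
    set A := yPP yp x₁ t₀ with hA
    set Bm := yPP ym x₁ t₀ with hBm
    have hx₁0 : x₁ ≠ 0 := by linarith
    have heq : Eop2 yp x₁ t₀ - Eop2 ym x₁ t₀
        = a * (A - Bm) - e * Bm - e + e * (2 * a + e) / x₁ ^ 2 := by
      simp only [Eop2, hmval, hP, ← hA, ← hBm, ← ha, ← he]
      ring
    have hfrac : 0 ≤ e * (2 * a + e) / x₁ ^ 2 := by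
      apply div_nonneg _ (by positivity)
      have : 0 ≤ 2 * a + e := by linarith
      exact mul_nonneg hδe.le this
    have haAB : 0 ≤ a * (A - Bm) := mul_nonneg hyp0 hPP
    have heCB : 0 ≤ e * (C - Bm) := mul_nonneg hδe.le (by linarith)
    have hlow : -(e * C) - e ≤ yT yp x₁ t₀ - yT ym x₁ t₀ := by nlinarith
    have hup : yT yp x₁ t₀ - yT ym x₁ t₀ ≤ -(e * K) := by
      have : δ * (Real.exp (K * t₀) * K) = e * K := by rw [he]; ring
      linarith [hder, this.symm.le]
    have hcontr : 0 < e * (K - (C + 1)) := mul_pos hδe (by linarith)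
    nlinarith
  intro x t hxt
  by_contra hlt
  push_neg at hlt
  set w := yp x t - ym x t with hw
  have hwneg : w < 0 := by simp only [hw]; linarith
  have heT : (0:ℝ) < Real.exp (K * τb) := Real.exp_pos _
  have hδpos : 0 < -w / (2 * Real.exp (K * τb)) := div_pos (by linarith) (by positivity)
  have hkey := key _ hδpos x t hxt
  have hexple : Real.exp (K * t) ≤ Real.exp (K * τb) :=
    Real.exp_le_exp.mpr (mul_le_mul_of_nonneg_left hxt.2.2.2 hK0)
  have hprod : -w / (2 * Real.exp (K * τb)) * Real.exp (K * τb) = -w / 2 := by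
    field_simp
  nlinarith [Real.exp_pos (K * t), mul_le_mul_of_nonneg_left hexple hδpos.le]
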